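/- Let A ⊆ ℤ_{≥0}^d be finite, compressed, and let Φ be the shift map (x_1,...,x_d) ↦ (0,x_1,...,x_d) into ℤ_{≥0}^{d+1}. If |A + Φ(A)| = N, then for any I ⊆ {1,...,d}, |p_I(A)| ≤ N^{k/(k+1)}, where k = α(I) is the length of the longest run of consecutive integers contained in I. -/

import Mathlib

open scoped Pointwise

/-- Projection onto the coordinates indexed by `I`, zeroing the others. -/
def projI {d : ℕ} (I : Finset (Fin d)) (x : Fin d → ℕ) : Fin d → ℕ :=
  fun i => if i ∈ I then x i else 0

/-- The inclusion `(x_1,…,x_d) ↦ (x_1,…,x_d,0)` of `ℤ_{≥0}^d` into `ℤ_{≥0}^{d+1}`. -/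
def inclMap {d : ℕ} (x : Fin d → ℕ) : Fin (d + 1) → ℕ := Fin.snoc x 0

/-- The shift map `(x_1,…,x_d) ↦ (0,x_1,…,x_d)`. -/
def shiftMap {d : ℕ} (x : Fin d → ℕ) : Fin (d + 1) → ℕ := Fin.cons 0 x

/-- `A` is compressed: it is downward closed in each coordinate. -/
def IsCompressed {d : ℕ} (A : Finset (Fin d → ℕ)) : Prop :=
  ∀ a ∈ A, ∀ b : Fin d → ℕ, (∀ i, b i ≤ a i) → b ∈ A

/-- `I` contains a run of `k` consecutive indices. -/
def HasRun {d : ℕ} (I : Finset (Fin d)) (k : ℕ) : Prop :=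
  ∃ j : ℕ, ∀ t < k, ∃ h : j + t < d, (⟨j + t, h⟩ : Fin d) ∈ I

/-- `i` (as a natural number) is an index in `I`. -/
def Pred {d : ℕ} (I : Finset (Fin d)) (i : ℕ) : Prop :=
  ∃ h : i < d, (⟨i, h⟩ : Fin d) ∈ I

/-- Lift a tuple of vectors to an ℕ-indexed array. -/
def liftX {d k : ℕ} (x : Fin (k + 1) → Fin d → ℕ) (t i : ℕ) : ℕ :=
  if h : t < k + 1 ∧ i < d then x ⟨t, h.1⟩ ⟨i, h.2⟩ else 0

lemma add_coord {d : ℕ} (g h : Fin d → ℕ) (c : ℕ) (hc : c < d + 1) :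
    (inclMap g + shiftMap h) ⟨c, hc⟩ =
      (if hcd : c < d then g ⟨c, hcd⟩ else 0) +
      (if hc0 : 0 < c then h ⟨c - 1, by omega⟩ else 0) := by
  have hsnoc : (Fin.snoc (α := fun _ : Fin (d+1) => ℕ) g 0) ⟨c, hc⟩ = if hcd : c < d then g ⟨c, hcd⟩ else 0 := by
    by_cases h1 : c < d
    · rw [dif_pos h1]
      have e : (⟨c, hc⟩ : Fin (d + 1)) = Fin.castSucc ⟨c, h1⟩ := rfl
      rw [e, Fin.snoc_castSucc]
    · rw [dif_neg h1]
      have e : (⟨c, hc⟩ : Fin (d + 1)) = Fin.last d := by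
        apply Fin.ext; simp; omega
      rw [e, Fin.snoc_last]
  have hcons : (Fin.cons (α := fun _ : Fin (d+1) => ℕ) 0 h) ⟨c, hc⟩ =
      if hc0 : 0 < c then h ⟨c - 1, by omega⟩ else 0 := by
    by_cases h2 : 0 < c
    · rw [dif_pos h2]
      have e : (⟨c, hc⟩ : Fin (d + 1)) = Fin.succ ⟨c - 1, by omega⟩ := by
        apply Fin.ext; simp; omega
      rw [e, Fin.cons_succ]
    · rw [dif_neg h2]
      have e : (⟨c, hc⟩ : Fin (d + 1)) = 0 := by
        apply Fin.ext; simp; omega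
      rw [e, Fin.cons_zero]
  have e0 : (inclMap g + shiftMap h) ⟨c, hc⟩ =
      (Fin.snoc (α := fun _ : Fin (d+1) => ℕ) g 0) ⟨c, hc⟩ + (Fin.cons (α := fun _ : Fin (d+1) => ℕ) 0 h) ⟨c, hc⟩ := rfl
  rw [e0, hsnoc, hcons]

lemma find_run {d k : ℕ} (I : Finset (Fin d)) (hk' : ¬ HasRun I (k + 1)) {i : ℕ}
    (hPi : Pred I i) :
    ∃ ρ υ : ℕ, ρ ≤ i ∧ ρ + υ + 1 ≤ k ∧ (∀ r' ≤ ρ, Pred I (i - r')) ∧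
      (∀ r' ≤ υ, Pred I (i + r')) ∧ (i - ρ = 0 ∨ ¬ Pred I (i - ρ - 1)) ∧
      ¬ Pred I (i + υ + 1) := by
  classical
  have hrun : ∀ j : ℕ, ¬ ∀ t ≤ k, Pred I (j + t) := by
    intro j hj
    exact hk' ⟨j, fun t ht => hj t (by omega)⟩
  set ρ := Nat.findGreatest (fun r => ∀ r' ≤ r, Pred I (i - r')) i with hρdef
  set υ := Nat.findGreatest (fun r => ∀ r' ≤ r, Pred I (i + r')) k with hυdef
  have hρi : ρ ≤ i := Nat.findGreatest_le i
  have hυk : υ ≤ k := Nat.findGreatest_le k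
  have hρ1 : ∀ r' ≤ ρ, Pred I (i - r') := by
    have h0 : ∀ r' ≤ 0, Pred I (i - r') := by
      intro r' hr'
      rw [Nat.le_zero] at hr'
      subst hr'
      simpa using hPi
    exact Nat.findGreatest_spec (P := fun r => ∀ r' ≤ r, Pred I (i - r')) (Nat.zero_le i) h0
  have hυ1 : ∀ r' ≤ υ, Pred I (i + r') := by
    have h0 : ∀ r' ≤ 0, Pred I (i + r') := by
      intro r' hr'
      rw [Nat.le_zero] at hr'
      subst hr'
      simpa using hPi
    exact Nat.findGreatest_spec (P := fun r => ∀ r' ≤ r, Pred I (i + r')) (Nat.zero_le k) h0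
  have hρstart : i - ρ = 0 ∨ ¬ Pred I (i - ρ - 1) := by
    by_cases hρi' : ρ = i
    · left; omega
    · right
      intro hcon
      have hgt := Nat.findGreatest_is_greatest (P := fun r => ∀ r' ≤ r, Pred I (i - r'))
        (n := i) (k := ρ + 1) (by omega) (by omega)
      apply hgt
      intro r' hr'
      rcases Nat.lt_or_ge r' (ρ + 1) with h | h
      · exact hρ1 r' (by omega)
      · have h2 : r' = ρ + 1 := by omega
        subst h2
        rwa [show i - (ρ + 1) = i - ρ - 1 by omega]
  have hυlt : υ < k := by
    rcases Nat.lt_or_ge υ k with h | h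
    · exact h
    · exfalso
      have hυe : υ = k := by omega
      apply hrun i
      intro t ht
      exact hυ1 t (by omega)
  have hυend : ¬ Pred I (i + υ + 1) := by
    intro hcon
    have hgt := Nat.findGreatest_is_greatest (P := fun r => ∀ r' ≤ r, Pred I (i + r'))
      (n := k) (k := υ + 1) (by omega) (by omega)
    apply hgt
    intro r' hr'
    rcases Nat.lt_or_ge r' (υ + 1) with h | h
    · exact hυ1 r' (by omega)
    · have h2 : r' = υ + 1 := by omega
      subst h2
      rwa [show i + (υ + 1) = i + υ + 1 by omega]
  have hlen : ρ + υ + 1 ≤ k := by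
    by_contra hcon
    apply hrun (i - ρ)
    intro t ht
    by_cases hc : t ≤ ρ
    · have := hρ1 (ρ - t) (by omega)
      rwa [show i - (ρ - t) = i - ρ + t by omega] at this
    · have := hυ1 (t - ρ) (by omega)
      rwa [show i + (t - ρ) = i - ρ + t by omega] at this
  exact ⟨ρ, υ, hρi, hlen, hρ1, hυ1, hρstart, hυend⟩

lemma main_inj {d k : ℕ} (I : Finset (Fin d)) (hk' : ¬ HasRun I (k + 1))
    (x y : Fin (k + 1) → Fin d → ℕ)
    (hxI : ∀ t i, i ∉ I → x t i = 0) (hyI : ∀ t i, i ∉ I → y t i = 0)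
    (hF : ∀ s : Fin k,
      inclMap (x s.castSucc) + shiftMap (x s.succ) =
      inclMap (y s.castSucc) + shiftMap (y s.succ)) :
    x = y := by
  classical
  obtain ⟨X, hX⟩ : ∃ X, X = liftX x := ⟨_, rfl⟩
  obtain ⟨Y, hY⟩ : ∃ Y, Y = liftX y := ⟨_, rfl⟩
  have eX : ∀ (t : ℕ) (ht : t < k + 1) (i : ℕ) (hi : i < d), X t i = x ⟨t, ht⟩ ⟨i, hi⟩ := by
    intro t ht i hi
    rw [hX]; unfold liftX; rw [dif_pos ⟨ht, hi⟩]
  have eY : ∀ (t : ℕ) (ht : t < k + 1) (i : ℕ) (hi : i < d), Y t i = y ⟨t, ht⟩ ⟨i, hi⟩ := by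
    intro t ht i hi
    rw [hY]; unfold liftX; rw [dif_pos ⟨ht, hi⟩]
  have hsX : ∀ t i, ¬ Pred I i → X t i = 0 := by
    intro t i hPi
    rw [hX]; unfold liftX
    split
    · rename_i h
      apply hxI
      intro hmem
      exact hPi ⟨h.2, hmem⟩
    · rfl
  have hsY : ∀ t i, ¬ Pred I i → Y t i = 0 := by
    intro t i hPi
    rw [hY]; unfold liftX
    split
    · rename_i h
      apply hyI
      intro hmem
      exact hPi ⟨h.2, hmem⟩
    · rfl
  have hE : ∀ s, s < k → ∀ c, c ≤ d →
      (if h : c < d then X s c else 0) + (if h : 0 < c then X (s + 1) (c - 1) else 0) =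
      (if h : c < d then Y s c else 0) + (if h : 0 < c then Y (s + 1) (c - 1) else 0) := by
    intro s hs c hc
    have h0 := congrFun (hF ⟨s, hs⟩) ⟨c, by omega⟩
    rw [add_coord, add_coord] at h0
    have hsc : ((⟨s, hs⟩ : Fin k).castSucc : Fin (k + 1)) = ⟨s, by omega⟩ := rfl
    have hss : ((⟨s, hs⟩ : Fin k).succ : Fin (k + 1)) = ⟨s + 1, by omega⟩ := rfl
    rw [hsc, hss] at h0
    by_cases h1 : c < d
    · simp only [dif_pos h1] at h0 ⊢
      by_cases h2 : 0 < c
      · simp only [dif_pos h2] at h0 ⊢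
        have E1 := eX s (by omega) c h1
        have E2 := eX (s + 1) (by omega) (c - 1) (by omega)
        have F1 := eY s (by omega) c h1
        have F2 := eY (s + 1) (by omega) (c - 1) (by omega)
        exact (congrArg₂ (· + ·) E1 E2).trans
          (h0.trans (congrArg₂ (· + ·) F1.symm F2.symm))
      · simp only [dif_neg h2] at h0 ⊢
        have E1 := eX s (by omega) c h1
        have F1 := eY s (by omega) c h1
        exact (congrArg₂ (· + ·) E1 rfl).trans
          (h0.trans (congrArg₂ (· + ·) F1.symm rfl))
    · simp only [dif_neg h1] at h0 ⊢
      by_cases h2 : 0 < c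
      · simp only [dif_pos h2] at h0 ⊢
        have E2 := eX (s + 1) (by omega) (c - 1) (by omega)
        have F2 := eY (s + 1) (by omega) (c - 1) (by omega)
        exact (congrArg₂ (· + ·) rfl E2).trans
          (h0.trans (congrArg₂ (· + ·) rfl F2.symm))
      · simp only [dif_neg h2] at h0 ⊢
  have hA' : ∀ s, s < k → ∀ i, i < d → (i = 0 ∨ ¬ Pred I (i - 1)) → X s i = Y s i := by
    intro s hs i hi hcond
    have h0 := hE s hs i (by omega)
    simp only [dif_pos hi] at h0
    rcases hcond with h2 | h2
    · subst h2
      simp only [dif_neg (lt_irrefl 0)] at h0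
      omega
    · by_cases h3 : 0 < i
      · simp only [dif_pos h3] at h0
        rw [hsX (s + 1) (i - 1) h2, hsY (s + 1) (i - 1) h2] at h0
        omega
      · simp only [dif_neg h3] at h0
        omega
  have hB' : ∀ s, s < k → ∀ j, j < d → ¬ Pred I (j + 1) → X (s + 1) j = Y (s + 1) j := by
    intro s hs j hj hPn
    have h0 := hE s hs (j + 1) (by omega)
    simp only [dif_pos (show 0 < j + 1 by omega)] at h0
    by_cases hd2 : j + 1 < d
    · simp only [dif_pos hd2] at h0
      rw [hsX s (j + 1) hPn, hsY s (j + 1) hPn] at h0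
      simpa using h0
    · simp only [dif_neg hd2] at h0
      simpa using h0
  have hC' : ∀ s, s < k → ∀ i, 0 < i → i < d →
      X s i + X (s + 1) (i - 1) = Y s i + Y (s + 1) (i - 1) := by
    intro s hs i h0i hid
    have h0 := hE s hs i (by omega)
    simp only [dif_pos hid, dif_pos h0i] at h0
    exact h0
  have L : ∀ r t i, t + r < k → i < d → (∀ r' ≤ r, Pred I (i - r')) →
      (i - r = 0 ∨ ¬ Pred I (i - r - 1)) → X t i = Y t i := by
    intro r
    induction r with
    | zero =>
      intro t i h1 h2 h3 h4
      apply hA' t (by omega) i h2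
      simpa using h4
    | succ r ih =>
      intro t i h1 h2 h3 h4
      by_cases hi0 : i = 0
      · subst hi0
        exact hA' t (by omega) 0 h2 (Or.inl rfl)
      · have hi1 : 0 < i := Nat.pos_of_ne_zero hi0
        have hrec : X (t + 1) (i - 1) = Y (t + 1) (i - 1) := by
          refine ih (t + 1) (i - 1) (by omega) (by omega) ?_ ?_
          · intro r' hr'
            have := h3 (r' + 1) (by omega)
            rwa [show i - (r' + 1) = i - 1 - r' by omega] at this
          · rcases h4 with h | h
            · left; omega
            · right
              rwa [show i - (r + 1) - 1 = i - 1 - r - 1 by omega] at h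
        have hsum := hC' t (by omega) i hi1 h2
        omega
  have R : ∀ r t i, r + 1 ≤ t → t ≤ k → i < d → (∀ r' ≤ r, Pred I (i + r')) →
      ¬ Pred I (i + r + 1) → X t i = Y t i := by
    intro r
    induction r with
    | zero =>
      intro t i h1 h2 h3 h4 h5
      have h6 := hB' (t - 1) (by omega) i h3 (by simpa using h5)
      rwa [show t - 1 + 1 = t by omega] at h6
    | succ r ih =>
      intro t i h1 h2 h3 h4 h5
      have hP1 : Pred I (i + 1) := by simpa using h4 1 (by omega)
      obtain ⟨hd1, -⟩ := hP1
      have hrec : X (t - 1) (i + 1) = Y (t - 1) (i + 1) := by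
        refine ih (t - 1) (i + 1) (by omega) (by omega) hd1 ?_ ?_
        · intro r' hr'
          have := h4 (r' + 1) (by omega)
          rwa [show i + (r' + 1) = i + 1 + r' by omega] at this
        · rwa [show i + 1 + r + 1 = i + (r + 1) + 1 by omega]
      have hsum := hC' (t - 1) (by omega) (i + 1) (by omega) hd1
      rw [show t - 1 + 1 = t by omega, show i + 1 - 1 = i by omega] at hsum
      omega
  have Main : ∀ t i, t ≤ k → i < d → X t i = Y t i := by
    intro t i ht hi
    by_cases hPi : Pred I i
    · obtain ⟨ρ, υ, hρi, hlen, hρ1, hυ1, hρstart, hυend⟩ := find_run I hk' hPi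
      by_cases hcase : t + ρ < k
      · exact L ρ t i hcase hi hρ1 hρstart
      · exact R υ t i (by omega) ht hi hυ1 hυend
    · rw [hsX t i hPi, hsY t i hPi]
  funext t i
  have h := Main t.val i.val (Nat.lt_succ_iff.mp t.isLt) i.isLt
  rw [eX t.val t.isLt i.val i.isLt, eY t.val t.isLt i.val i.isLt] at h
  exact h

lemma key_card {d k : ℕ} (A : Finset (Fin d → ℕ)) (hA : IsCompressed A)
    (I : Finset (Fin d)) (hk' : ¬ HasRun I (k + 1)) :
    (A.image (projI I)).card ^ (k + 1) ≤ (A.image inclMap + A.image shiftMap).card ^ k := by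
  classical
  have hpi : ∀ (n : ℕ) {β : Type} [DecidableEq β] (T : Finset β),
      (Fintype.piFinset fun _ : Fin n => T).card = T.card ^ n := by
    intro n β _ T
    rw [Fintype.card_piFinset]
    simp
  rw [← hpi (k + 1) (A.image (projI I)), ← hpi k (A.image inclMap + A.image shiftMap)]
  apply Finset.card_le_card_of_injOn
    (fun x (s : Fin k) => inclMap (x s.castSucc) + shiftMap (x s.succ))
  · intro x hx
    rw [Finset.mem_coe, Fintype.mem_piFinset] at hx ⊢
    intro s
    have hmem : ∀ t : Fin (k + 1), x t ∈ A := by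
      intro t
      have h1 := hx t
      rw [Finset.mem_image] at h1
      obtain ⟨a, ha, hpa⟩ := h1
      rw [← hpa]
      apply hA a ha
      intro i
      unfold projI
      split
      · exact le_refl _
      · exact Nat.zero_le _
    exact Finset.mem_add.mpr ⟨_, Finset.mem_image_of_mem inclMap (hmem s.castSucc),
      _, Finset.mem_image_of_mem shiftMap (hmem s.succ), rfl⟩
  · intro x hx y hy hxy
    rw [Finset.mem_coe, Fintype.mem_piFinset] at hx hy
    have hsupp : ∀ (z : Fin (k + 1) → Fin d → ℕ),
        (∀ t, z t ∈ A.image (projI I)) → ∀ t i, i ∉ I → z t i = 0 := by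
      intro z hz t i hiI
      have h1 := hz t
      rw [Finset.mem_image] at h1
      obtain ⟨a, -, hpa⟩ := h1
      rw [← hpa]
      exact if_neg hiI
    exact main_inj I hk' x y (hsupp x hx) (hsupp y hy) (fun s => congrFun hxy s)

theorem projection_bound {d : ℕ} (A : Finset (Fin d → ℕ)) (hA : IsCompressed A)
    (N : ℕ) (hN : (A.image inclMap + A.image shiftMap).card = N)
    (I : Finset (Fin d)) (k : ℕ) (hk : HasRun I k) (hk' : ¬ HasRun I (k + 1)) :
    ((A.image (projI I)).card : ℝ) ≤ (N : ℝ) ^ ((k : ℝ) / (k + 1)) := by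
  have hkey := key_card A hA I hk'
  rw [hN] at hkey
  set M := (A.image (projI I)).card with hM
  have hcast : ((M : ℝ)) ^ (k + 1) ≤ ((N : ℝ)) ^ k := by exact_mod_cast hkey
  have hmono : (((M : ℝ)) ^ (k + 1)) ^ (((k : ℝ) + 1)⁻¹) ≤
      (((N : ℝ)) ^ k) ^ (((k : ℝ) + 1)⁻¹) :=
    Real.rpow_le_rpow (by positivity) hcast (by positivity)
  have hL : (((M : ℝ)) ^ (k + 1)) ^ (((k : ℝ) + 1)⁻¹) = (M : ℝ) := by
    rw [show ((k : ℝ) + 1) = ((k + 1 : ℕ) : ℝ) by push_cast; ring]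
    exact Real.pow_rpow_inv_natCast (by positivity) (by omega)
  have hR : (((N : ℝ)) ^ k) ^ (((k : ℝ) + 1)⁻¹) = (N : ℝ) ^ ((k : ℝ) / ((k : ℝ) + 1)) := by
    rw [← Real.rpow_natCast (N : ℝ) k, ← Real.rpow_mul (by positivity), div_eq_mul_inv]
  rw [hL, hR] at hmono
  exact hmono
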